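/- Assume d_σ ≥ d_τ. Then for every α ∈ [0,1] the Wasserstein distance satisfies W(m_τ^α, m_σ^α) ≥ α + (1−α)·(3 − 2/d_τ − (d_σ + d_τ − n_σ − n_τ)/d_σ). -/

import Mathlib

open Finset Filter Topology

noncomputable section

/-- A coupling between two (probability) mass functions `μ` and `ν` on a finite
vertex set: a matrix with values in `[0,1]` whose row sums are `μ` and whose
column sums are `ν`. -/
def IsCoupling {V : Type*} [Fintype V] (A : V → V → ℝ) (μ ν : V → ℝ) : Prop :=
  (∀ x y, 0 ≤ A x y ∧ A x y ≤ 1) ∧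
  (∀ x, ∑ y, A x y = μ x) ∧
  (∀ y, ∑ x, A x y = ν y)

/-- The (1-)Wasserstein distance between two mass functions on the vertex set of a
graph, with respect to the graph distance. -/
def Wass {V : Type*} [Fintype V] (G : SimpleGraph V) (μ ν : V → ℝ) : ℝ :=
  sInf {c | ∃ A : V → V → ℝ, IsCoupling A μ ν ∧
    c = ∑ x, ∑ y, A x y * (G.dist x y : ℝ)}

/-- The probability measure `m_x^α`: mass `α` at `x`, mass `(1-α)/d_x` at each
neighbor of `x`, and `0` elsewhere. -/
def mMeas {V : Type*} [Fintype V] [DecidableEq V] (G : SimpleGraph V)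
    [DecidableRel G.Adj] (α : ℝ) (x : V) : V → ℝ :=
  fun z => if z = x then α else if G.Adj x z then (1 - α) / (G.degree x : ℝ) else 0

/-- The `α`-Ricci curvature `κ_α(x,y) = 1 - W(m_x^α, m_y^α)/d(x,y)`. -/
def kappaAlpha {V : Type*} [Fintype V] [DecidableEq V] (G : SimpleGraph V)
    [DecidableRel G.Adj] (α : ℝ) (x y : V) : ℝ :=
  1 - Wass G (mMeas G α x) (mMeas G α y) / (G.dist x y : ℝ)

/-- The Lin–Lu–Yau Ricci curvature `κ(x,y) = lim_{α→1⁻} κ_α(x,y)/(1-α)`. -/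
def kappa {V : Type*} [Fintype V] [DecidableEq V] (G : SimpleGraph V)
    [DecidableRel G.Adj] (x y : V) : ℝ :=
  limUnder (𝓝[<] (1 : ℝ)) (fun α => kappaAlpha G α x y / (1 - α))

/-- The (non-normalized) graph Laplacian `(Δf)(x) = d_x f(x) - ∑_{y ~ x} f(y)`. -/
def lap {V : Type*} [Fintype V] [DecidableEq V] (G : SimpleGraph V)
    [DecidableRel G.Adj] (f : V → ℝ) (x : V) : ℝ :=
  (G.degree x : ℝ) * f x - ∑ y ∈ G.neighborFinset x, f y

end

/-!
A coupling of `m_τ^α` and `m_σ^α` only charges pairs in the product of their supports, so every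
potential `f` with `f x - f y ≤ d(x, y)` on such pairs gives `∑ f m_τ^α - ∑ f m_σ^α ≤ W` (weak
Kantorovich duality). For the potential equal to `1` at `τ` and on `T_σ`, `0` at `σ`, `2` on
`S_τ ∪ T_τ` and `-1` on `S_σ`, the left side is
`α + 2 (1 - α) (n_τ + m) / d_τ - (1 - α) (1 - n_σ + m) / d_σ`, which is the claimed bound.
-/

namespace IsCoupling

variable {V : Type*} [Fintype V] {A : V → V → ℝ} {μ ν : V → ℝ}

lemma eq_zero_of_left (hA : IsCoupling A μ ν) {x : V} (hx : μ x = 0) (y : V) : A x y = 0 :=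
  (sum_eq_zero_iff_of_nonneg fun y _ ↦ (hA.1 x y).1).mp ((hA.2.1 x).trans hx) y (mem_univ y)

lemma eq_zero_of_right (hA : IsCoupling A μ ν) {y : V} (hy : ν y = 0) (x : V) : A x y = 0 :=
  (sum_eq_zero_iff_of_nonneg fun x _ ↦ (hA.1 x y).1).mp ((hA.2.2 y).trans hy) x (mem_univ x)

lemma sum_mul_sub (hA : IsCoupling A μ ν) (f : V → ℝ) :
    ∑ x, ∑ y, A x y * (f x - f y) = ∑ x, f x * μ x - ∑ y, f y * ν y := by
  simp only [mul_sub, sum_sub_distrib]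
  rw [sum_comm (f := fun x y ↦ A x y * f y)]
  simp only [← sum_mul, hA.2.1, hA.2.2, mul_comm]

lemma sub_le_cost (G : SimpleGraph V) (hA : IsCoupling A μ ν) {f : V → ℝ}
    (hf : ∀ x y, μ x ≠ 0 → ν y ≠ 0 → f x - f y ≤ G.dist x y) :
    ∑ x, f x * μ x - ∑ y, f y * ν y ≤ ∑ x, ∑ y, A x y * (G.dist x y : ℝ) := by
  rw [← hA.sum_mul_sub]
  refine sum_le_sum fun x _ ↦ sum_le_sum fun y _ ↦ ?_
  by_cases hx : μ x = 0
  · simp [hA.eq_zero_of_left hx]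
  by_cases hy : ν y = 0
  · simp [hA.eq_zero_of_right hy]
  exact mul_le_mul_of_nonneg_left (hf x y hx hy) (hA.1 x y).1

end IsCoupling

section Wasserstein

variable {V : Type*} [Fintype V] {μ ν : V → ℝ}

lemma le_one_of_sum_eq_one (hμ : ∀ x, 0 ≤ μ x) (hμ1 : ∑ x, μ x = 1) (x : V) : μ x ≤ 1 :=
  hμ1 ▸ single_le_sum (fun y _ ↦ hμ y) (mem_univ x)

lemma isCoupling_mul (hμ : ∀ x, 0 ≤ μ x) (hμ1 : ∑ x, μ x = 1) (hν : ∀ y, 0 ≤ ν y)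
    (hν1 : ∑ y, ν y = 1) : IsCoupling (fun x y ↦ μ x * ν y) μ ν := by
  refine ⟨fun x y ↦ ⟨mul_nonneg (hμ x) (hν y), ?_⟩, fun x ↦ ?_, fun y ↦ ?_⟩
  · exact mul_le_one₀ (le_one_of_sum_eq_one hμ hμ1 x) (hν y) (le_one_of_sum_eq_one hν hν1 y)
  · rw [← mul_sum, hν1, mul_one]
  · rw [← sum_mul, hμ1, one_mul]

lemma sub_le_wass (G : SimpleGraph V) (hμ : ∀ x, 0 ≤ μ x) (hμ1 : ∑ x, μ x = 1)
    (hν : ∀ y, 0 ≤ ν y) (hν1 : ∑ y, ν y = 1) {f : V → ℝ}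
    (hf : ∀ x y, μ x ≠ 0 → ν y ≠ 0 → f x - f y ≤ G.dist x y) :
    ∑ x, f x * μ x - ∑ y, f y * ν y ≤ Wass G μ ν :=
  le_csInf ⟨_, _, isCoupling_mul hμ hμ1 hν hν1, rfl⟩ <| by
    rintro _ ⟨A, hA, rfl⟩
    exact hA.sub_le_cost G hf

end Wasserstein

section Neighborhood

variable {V : Type*} [Fintype V] [DecidableEq V] (G : SimpleGraph V) [DecidableRel G.Adj]

lemma mMeas_nonneg {α : ℝ} (hα : α ∈ Set.Icc (0 : ℝ) 1) (v z : V) : 0 ≤ mMeas G α v z := by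
  unfold mMeas
  split_ifs
  · exact hα.1
  · exact div_nonneg (sub_nonneg.mpr hα.2) (Nat.cast_nonneg _)
  · exact le_rfl

lemma mem_insert_neighborFinset_of_mMeas_ne_zero {α : ℝ} {v z : V} (h : mMeas G α v z ≠ 0) :
    z ∈ insert v (G.neighborFinset v) := by
  unfold mMeas at h
  split_ifs at h with hz hadj
  · exact mem_insert.mpr (Or.inl hz)
  · exact mem_insert_of_mem ((G.mem_neighborFinset v z).mpr hadj)
  · exact absurd rfl h

lemma sum_mul_mMeas (α : ℝ) (v : V) (g : V → ℝ) :
    ∑ x, g x * mMeas G α v x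
      = α * g v + (1 - α) / G.degree v * ∑ x ∈ G.neighborFinset v, g x := by
  have hsplit : ∀ x, g x * mMeas G α v x = (if x = v then α * g v else 0)
      + if x ∈ G.neighborFinset v then (1 - α) / G.degree v * g x else 0 := by
    intro x
    by_cases hx : x = v
    · subst hx
      simp [mMeas, mul_comm]
    · by_cases hadj : G.Adj v x <;> simp [mMeas, hx, hadj, mul_comm]
  simp only [hsplit, sum_add_distrib, sum_ite_eq', mem_univ, if_true, sum_ite_mem, univ_inter,
    mul_sum]

lemma sum_mMeas (α : ℝ) {v : V} (hv : 0 < G.degree v) : ∑ x, mMeas G α v x = 1 := by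
  have hv' : (G.degree v : ℝ) ≠ 0 := by exact_mod_cast hv.ne'
  simpa [G.card_neighborFinset_eq_degree, hv'] using sum_mul_mMeas G α v 1

lemma degree_eq_of_neighborFinset_eq {v w : V} {S T : Finset V}
    (h : G.neighborFinset v = insert w (S ∪ T)) (hw : w ∉ S ∪ T) (hST : Disjoint S T) :
    G.degree v = 1 + #S + #T := by
  rw [← G.card_neighborFinset_eq_degree, h, card_insert_of_notMem hw, card_union_of_disjoint hST]
  ring

end Neighborhood

section EdgePotential

variable {V : Type*} [DecidableEq V] {σ z : V} {A S : Finset V}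

/-- The test potential, with `A = S_τ ∪ T_τ` and `S = S_σ`; its value `1` is the one taken at `τ`
and on `T_σ`. -/
def edgePotential (σ : V) (A S : Finset V) (z : V) : ℝ :=
  if z ∈ S then -1 else if z ∈ A then 2 else if z = σ then 0 else 1

lemma edgePotential_of_mem_right (hz : z ∈ S) : edgePotential σ A S z = -1 := by
  simp [edgePotential, hz]

lemma edgePotential_of_mem_left (hzA : z ∈ A) (hzS : z ∉ S) : edgePotential σ A S z = 2 := by
  simp [edgePotential, hzA, hzS]

lemma edgePotential_self (hσA : σ ∉ A) (hσS : σ ∉ S) : edgePotential σ A S σ = 0 := by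
  simp [edgePotential, hσA, hσS]

lemma edgePotential_of_notMem (hzA : z ∉ A) (hzS : z ∉ S) (hzσ : z ≠ σ) :
    edgePotential σ A S z = 1 := by
  simp [edgePotential, hzA, hzS, hzσ]

variable {τ : V} {T : Finset V}

lemma sum_edgePotential_insert_left (hσA : σ ∉ A) (hσS : σ ∉ S) (hAS : Disjoint A S) :
    ∑ z ∈ insert σ A, edgePotential σ A S z = 2 * #A := by
  rw [sum_insert hσA, edgePotential_self hσA hσS,
    sum_congr rfl fun z hz ↦ edgePotential_of_mem_left hz (disjoint_left.mp hAS hz), sum_const,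
    nsmul_eq_mul]
  ring

lemma sum_edgePotential_insert_right (hτσ : τ ≠ σ) (hτA : τ ∉ A) (hτST : τ ∉ S ∪ T)
    (hAT : Disjoint A T) (hST : Disjoint S T) (hσT : σ ∉ T) :
    ∑ z ∈ insert τ (S ∪ T), edgePotential σ A S z = 1 - #S + #T := by
  rw [sum_insert hτST, sum_union hST,
    edgePotential_of_notMem hτA (notMem_union.mp hτST).1 hτσ,
    sum_congr rfl fun z hz ↦ edgePotential_of_mem_right hz,
    sum_congr rfl fun z hz ↦ edgePotential_of_notMem (disjoint_right.mp hAT hz)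
      (disjoint_right.mp hST hz) (ne_of_mem_of_not_mem hz hσT), sum_const, sum_const,
    nsmul_eq_mul, nsmul_eq_mul]
  ring

lemma edgePotential_sub_le_dist (G : SimpleGraph V) (hconn : G.Connected) (hadj : G.Adj τ σ)
    (hτA : τ ∉ A) (hσA : σ ∉ A) (hτST : τ ∉ S ∪ T) (hσST : σ ∉ S ∪ T)
    (hAS : Disjoint A S) (hAT : Disjoint A T) (hST : Disjoint S T)
    (hAσ : ∀ x ∈ A, ¬ G.Adj x σ) (hSTτ : ∀ y ∈ S ∪ T, ¬ G.Adj y τ)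
    (hAS3 : ∀ x ∈ A, ∀ y ∈ S, 3 ≤ G.dist x y) {x y : V}
    (hx : x ∈ insert τ (insert σ A)) (hy : y ∈ insert σ (insert τ (S ∪ T))) :
    edgePotential σ A S x - edgePotential σ A S y ≤ G.dist x y := by
  have zero_le (u v : V) : (0 : ℝ) ≤ G.dist u v := Nat.cast_nonneg _
  have one_le {u v : V} (h : u ≠ v) : (1 : ℝ) ≤ G.dist u v := by
    exact_mod_cast hconn.pos_dist_of_ne h
  have two_le {u v : V} (h : u ≠ v) (hn : ¬ G.Adj u v) : (2 : ℝ) ≤ G.dist u v := by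
    exact_mod_cast hconn.one_lt_dist_of_ne_of_not_adj h hn
  obtain ⟨hτS, -⟩ := notMem_union.mp hτST
  obtain ⟨hσS, hσT⟩ := notMem_union.mp hσST
  have fτ : edgePotential σ A S τ = 1 := edgePotential_of_notMem hτA hτS hadj.ne
  have fσ : edgePotential σ A S σ = 0 := edgePotential_self hσA hσS
  have fA {z : V} (hz : z ∈ A) : edgePotential σ A S z = 2 :=
    edgePotential_of_mem_left hz (disjoint_left.mp hAS hz)
  have fT {z : V} (hz : z ∈ T) : edgePotential σ A S z = 1 :=
    edgePotential_of_notMem (disjoint_right.mp hAT hz) (disjoint_right.mp hST hz)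
      (ne_of_mem_of_not_mem hz hσT)
  simp only [mem_insert, mem_union] at hx hy
  rcases hx with hx | hx | hxA <;> rcases hy with hy | hy | hyS | hyT
  · rw [hx, hy, fτ, fσ]; linarith [one_le hadj.ne]
  · rw [hx, hy, sub_self]; exact zero_le τ τ
  · rw [hx, fτ, edgePotential_of_mem_right hyS]
    have hτy : ¬ G.Adj τ y := fun h ↦ hSTτ y (mem_union_left T hyS) h.symm
    linarith [two_le (ne_of_mem_of_not_mem hyS hτS).symm hτy]
  · rw [hx, fτ, fT hyT]; linarith [zero_le τ y]
  · rw [hx, hy, sub_self]; exact zero_le σ σ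
  · rw [hx, hy, fσ, fτ]; linarith [zero_le σ τ]
  · rw [hx, fσ, edgePotential_of_mem_right hyS]
    linarith [one_le (ne_of_mem_of_not_mem hyS hσS).symm]
  · rw [hx, fσ, fT hyT]; linarith [zero_le σ y]
  · rw [hy, fA hxA, fσ]; linarith [two_le (ne_of_mem_of_not_mem hxA hσA) (hAσ x hxA)]
  · rw [hy, fA hxA, fτ]; linarith [one_le (ne_of_mem_of_not_mem hxA hτA)]
  · rw [fA hxA, edgePotential_of_mem_right hyS]
    have h3 : (3 : ℝ) ≤ G.dist x y := by exact_mod_cast hAS3 x hxA y hyS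
    linarith
  · rw [fA hxA, fT hyT]
    linarith [one_le (ne_of_mem_of_not_mem hxA (disjoint_right.mp hAT hyT))]

end EdgePotential

theorem stmt5_general
    {V : Type*} [Fintype V] [DecidableEq V]
    (G : SimpleGraph V) [DecidableRel G.Adj]
    (hconn : G.Connected)
    (τ σ : V) (hadj : G.Adj τ σ)
    (Sτ Tτ Sσ Tσ : Finset V) (φ : V → V)
    (hNτ : G.neighborFinset τ = insert σ (Sτ ∪ Tτ))
    (hNσ : G.neighborFinset σ = insert τ (Sσ ∪ Tσ))
    (hσnot : σ ∉ Sτ ∪ Tτ) (hτnot : τ ∉ Sσ ∪ Tσ)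
    (hdisjτ : Disjoint Sτ Tτ) (hdisjσ : Disjoint Sσ Tσ)
    (hφ : Set.BijOn φ ↑Tτ ↑Tσ)
    (hd1 : Disjoint Sτ Sσ) (hd2 : Disjoint Sτ Tσ)
    (hd3 : Disjoint Tτ Sσ) (hd4 : Disjoint Tτ Tσ)
    (hτd : τ ∉ Sτ ∪ Tτ) (hσd : σ ∉ Sσ ∪ Tσ)
    (hnadjσ : ∀ x ∈ Sτ ∪ Tτ, ¬ G.Adj x σ)
    (hnadjτ : ∀ x ∈ Sσ ∪ Tσ, ¬ G.Adj x τ)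
    (hdist1 : ∀ x ∈ Sτ ∪ Tτ, ∀ y ∈ Sσ, 3 ≤ G.dist x y)
    (α : ℝ) (hα : α ∈ Set.Icc (0 : ℝ) 1) :
    α + (1 - α) * (3 - 2 / (G.degree τ : ℝ)
        - ((G.degree σ : ℝ) + (G.degree τ : ℝ) - (Sσ.card : ℝ) - (Sτ.card : ℝ))
            / (G.degree σ : ℝ)) ≤
      Wass G (mMeas G α τ) (mMeas G α σ) := by
  obtain ⟨hσS, hσT⟩ := notMem_union.mp hσd
  have hAS : Disjoint (Sτ ∪ Tτ) Sσ := disjoint_union_left.mpr ⟨hd1, hd3⟩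
  have hAT : Disjoint (Sτ ∪ Tτ) Tσ := disjoint_union_left.mpr ⟨hd2, hd4⟩
  have hW := sub_le_wass G (mMeas_nonneg G hα τ)
    (sum_mMeas G α ((G.degree_pos_iff_exists_adj τ).mpr ⟨σ, hadj⟩)) (mMeas_nonneg G hα σ)
    (sum_mMeas G α ((G.degree_pos_iff_exists_adj σ).mpr ⟨τ, hadj.symm⟩))
    (f := edgePotential σ (Sτ ∪ Tτ) Sσ) fun x y hx hy ↦
      edgePotential_sub_le_dist G hconn hadj hτd hσnot hτnot hσd hAS hAT hdisjσ hnadjσ hnadjτ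
        hdist1 (hNτ ▸ mem_insert_neighborFinset_of_mMeas_ne_zero G hx)
        (hNσ ▸ mem_insert_neighborFinset_of_mMeas_ne_zero G hy)
  rw [sum_mul_mMeas, sum_mul_mMeas, hNτ, hNσ, sum_edgePotential_insert_left hσnot hσS hAS,
    sum_edgePotential_insert_right hadj.ne hτd hτnot hAT hdisjσ hσT,
    edgePotential_of_notMem hτd (notMem_union.mp hτnot).1 hadj.ne, edgePotential_self hσnot hσS,
    card_union_of_disjoint hdisjτ] at hW
  convert hW using 1
  rw [degree_eq_of_neighborFinset_eq G hNτ hσnot hdisjτ,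
    degree_eq_of_neighborFinset_eq G hNσ hτnot hdisjσ, ← hφ.finsetCard_eq φ]
  push_cast
  field_simp
  ring

theorem stmt5
    {V : Type*} [Fintype V] [DecidableEq V]
    (G : SimpleGraph V) [DecidableRel G.Adj]
    (hconn : G.Connected) (hcard : 1 < Fintype.card V)
    (τ σ : V) (hadj : G.Adj τ σ)
    (Sτ Tτ Sσ Tσ : Finset V) (φ : V → V)
    (hNτ : G.neighborFinset τ = insert σ (Sτ ∪ Tτ))
    (hNσ : G.neighborFinset σ = insert τ (Sσ ∪ Tσ))
    (hσnot : σ ∉ Sτ ∪ Tτ) (hτnot : τ ∉ Sσ ∪ Tσ)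
    (hdisjτ : Disjoint Sτ Tτ) (hdisjσ : Disjoint Sσ Tσ)
    (hφ : Set.BijOn φ ↑Tτ ↑Tσ)
    (hφadj : ∀ t ∈ Tτ, G.Adj t (φ t))
    (hd1 : Disjoint Sτ Sσ) (hd2 : Disjoint Sτ Tσ)
    (hd3 : Disjoint Tτ Sσ) (hd4 : Disjoint Tτ Tσ)
    (hτd : τ ∉ Sτ ∪ Tτ) (hσd : σ ∉ Sσ ∪ Tσ)
    (hnadjσ : ∀ x ∈ Sτ ∪ Tτ, ¬ G.Adj x σ)
    (hnadjτ : ∀ x ∈ Sσ ∪ Tσ, ¬ G.Adj x τ)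
    (hdist1 : ∀ x ∈ Sτ ∪ Tτ, ∀ y ∈ Sσ, 3 ≤ G.dist x y)
    (hdist2 : ∀ x ∈ Sτ, ∀ y ∈ Tσ, 3 ≤ G.dist x y)
    (hd : G.degree τ ≤ G.degree σ)
    (α : ℝ) (hα : α ∈ Set.Icc (0 : ℝ) 1) :
    α + (1 - α) * (3 - 2 / (G.degree τ : ℝ)
        - ((G.degree σ : ℝ) + (G.degree τ : ℝ) - (Sσ.card : ℝ) - (Sτ.card : ℝ))
            / (G.degree σ : ℝ)) ≤
      Wass G (mMeas G α τ) (mMeas G α σ) :=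
  stmt5_general G hconn τ σ hadj Sτ Tτ Sσ Tσ φ hNτ hNσ hσnot hτnot hdisjτ hdisjσ hφ hd1 hd2 hd3 hd4
    hτd hσd hnadjσ hnadjτ hdist1 α hα
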